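/- arXiv:1108.3102 — 5 statements merged into one kernel-verified Lean document; each statement's English description precedes it below -/
import Mathlib

section
/- Let a, b, c be integers. If the matrices [[a, b],[b+1, 0]] and [[c, b],[b+1, 0]] are congruent over ℤ, then there exists an integer n such that a + n·(2b+1) = c. -/
/-!
Congruence `W = P V Pᵀ` transforms the skew part `V - Vᵀ` of a `2 × 2` matrix by `det P`, so
here `det P = 1`. Comparing the second rows of `P V = W P⁻ᵀ` then gives `P₁₀ (2b + 1) = 0`, so `P`
is upper triangular with `P₀₀ = ±1`, and the top left entry of `W` is
`c = a P₀₀² + (2b + 1) P₀₀ P₀₁ = a + (2b + 1) P₀₀ P₀₁`.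
-/

open Matrix

/-- Two `n × n` integer matrices `V` and `W` are congruent over `ℤ` if there is an
integer matrix `P` with `det P = ±1` such that `P * V * Pᵀ = W`. -/
def IntCongruent {n : ℕ} (V W : Matrix (Fin n) (Fin n) ℤ) : Prop :=
  ∃ P : Matrix (Fin n) (Fin n) ℤ, (P.det = 1 ∨ P.det = -1) ∧ P * V * Pᵀ = W

namespace Matrix

variable {R : Type*} [CommRing R]

theorem mul_mul_transpose_apply_self_fin_two (P V : Matrix (Fin 2) (Fin 2) R) (i : Fin 2) :
    (P * V * Pᵀ) i i =
      V 0 0 * P i 0 ^ 2 + (V 0 1 + V 1 0) * P i 0 * P i 1 + V 1 1 * P i 1 ^ 2 := by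
  simp only [mul_apply, Fin.sum_univ_two, transpose_apply]
  ring

theorem det_mul_skew_entry_fin_two (P V : Matrix (Fin 2) (Fin 2) R) :
    P.det * (V 1 0 - V 0 1) = (P * V * Pᵀ) 1 0 - (P * V * Pᵀ) 0 1 := by
  simp only [det_fin_two, mul_apply, Fin.sum_univ_two, transpose_apply]
  ring

theorem lower_left_mul_eq_zero_of_mul_mul_transpose_eq {P : Matrix (Fin 2) (Fin 2) R}
    {a b c : R} (h : P * !![a, b; b + 1, 0] * Pᵀ = !![c, b; b + 1, 0]) (hdet : P.det = 1) :
    P 1 0 * (2 * b + 1) = 0 := by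
  have h10 := congrFun (congrFun h 1) 0
  have h11 := congrFun (congrFun h 1) 1
  simp only [det_fin_two] at hdet
  simp only [mul_apply, Fin.sum_univ_two, transpose_apply, of_apply, cons_val', cons_val_zero,
    cons_val_one, cons_val_fin_one, empty_val'] at h10 h11
  -- multiply the second row of `P V Pᵀ = W` by `adj Pᵀ`, whose second column is `(-P₁₀, P₀₀)`
  linear_combination P 0 0 * h11 - P 1 0 * h10 - P 1 0 * b * hdet

end Matrix

theorem stmt_1 (a b c : ℤ)
    (h : IntCongruent !![a, b; b + 1, 0] !![c, b; b + 1, 0]) :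
    ∃ n : ℤ, a + n * (2 * b + 1) = c := by
  obtain ⟨P, -, hP⟩ := h
  have hdet : P.det = 1 := by
    simpa [hP] using P.det_mul_skew_entry_fin_two !![a, b; b + 1, 0]
  have hlower : P 1 0 = 0 := by
    have := lower_left_mul_eq_zero_of_mul_mul_transpose_eq hP hdet
    exact (mul_eq_zero.mp this).resolve_right (by omega)
  have hsq : P 0 0 ^ 2 = 1 := by
    rw [det_fin_two, hlower, mul_zero, sub_zero] at hdet
    rcases Int.eq_one_or_neg_one_of_mul_eq_one hdet with h1 | h1 <;> simp [h1]
  have hc := P.mul_mul_transpose_apply_self_fin_two !![a, b; b + 1, 0] 0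
  refine ⟨P 0 0 * P 0 1, ?_⟩
  simp only [hP, of_apply, cons_val', cons_val_zero, cons_val_one, cons_val_fin_one,
    empty_val'] at hc
  linear_combination -a * hsq - hc
end

section
/- For all integers a, b, the 2×2 integer matrices [[a, b],[b+1, 0]] and [[a·b², b],[b+1, 0]] are S-equivalent. -/
open Matrix

/-- The column expansion of an `n × n` integer matrix `V` by a vector `u`:
the `(n+2) × (n+2)` matrix whose top-left `n × n` block is `V`, whose `(n+1)`-st row is
`(u 0, …, u (n-1), 0, 0)`, whose `(n+2)`-nd row is `(0, …, 0, 1, 0)`, and whose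
remaining entries are `0`. -/
def colExpand {n : ℕ} (V : Matrix (Fin n) (Fin n) ℤ) (u : Fin n → ℤ) :
    Matrix (Fin (n + 2)) (Fin (n + 2)) ℤ :=
  Matrix.of fun i j =>
    if hi : (i : ℕ) < n then
      if hj : (j : ℕ) < n then V ⟨i, hi⟩ ⟨j, hj⟩ else 0
    else if (i : ℕ) = n then
      if hj : (j : ℕ) < n then u ⟨j, hj⟩ else 0
    else
      if (j : ℕ) = n then 1 else 0

/-- The elementary moves of S-equivalence: unimodular congruence, column expansion
and row expansion (a row expansion of `V` is the transpose of a column expansion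
of `Vᵀ`). -/
inductive SMove :
    (Σ n, Matrix (Fin n) (Fin n) ℤ) → (Σ n, Matrix (Fin n) (Fin n) ℤ) → Prop
  | congruence {n : ℕ} (V P : Matrix (Fin n) (Fin n) ℤ) (hP : P.det = 1 ∨ P.det = -1) :
      SMove ⟨n, V⟩ ⟨n, P * V * Pᵀ⟩
  | colExp {n : ℕ} (V : Matrix (Fin n) (Fin n) ℤ) (u : Fin n → ℤ) :
      SMove ⟨n, V⟩ ⟨n + 2, colExpand V u⟩
  | rowExp {n : ℕ} (V : Matrix (Fin n) (Fin n) ℤ) (u : Fin n → ℤ) :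
      SMove ⟨n, V⟩ ⟨n + 2, (colExpand Vᵀ u)ᵀ⟩

/-- Two square integer matrices are S-equivalent if they are related by a finite sequence
of elementary moves and their inverses. -/
def SEquivalent {m n : ℕ} (V : Matrix (Fin m) (Fin m) ℤ) (W : Matrix (Fin n) (Fin n) ℤ) :
    Prop :=
  Relation.EqvGen SMove ⟨m, V⟩ ⟨n, W⟩

/-!
Write `V x b = [[x, b], [b + 1, 0]]`. The shear `[[1, k], [0, 1]]` turns `V x b` into
`V (x + k (2b + 1)) b`, so up to congruence only `x` modulo `2b + 1` matters. One
stabilization followed by an explicit unimodular `4 × 4` congruence shows that `V x b` is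
S-equivalent to `V (4x) b`; as `4ab² = a + a(2b - 1)(2b + 1)`, this links `V a b` with
`V (ab²) b`. The explicit congruence needs `b` odd; the even case reduces to it because
`V x b` is congruent to the transpose of `V x (-(b + 1))` and S-equivalence is compatible
with transposition.
-/

def genusOneSeifert (x b : ℤ) : Matrix (Fin 2) (Fin 2) ℤ :=
  !![x, b; b + 1, 0]

section SEquivalent

variable {m n k : ℕ} {U : Matrix (Fin m) (Fin m) ℤ} {V : Matrix (Fin n) (Fin n) ℤ}
  {W : Matrix (Fin k) (Fin k) ℤ}

theorem SEquivalent.symm (h : SEquivalent U V) : SEquivalent V U :=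
  Relation.EqvGen.symm _ _ h

theorem SEquivalent.trans (h₁ : SEquivalent U V) (h₂ : SEquivalent V W) : SEquivalent U W :=
  Relation.EqvGen.trans _ _ _ h₁ h₂

theorem sEquivalent_congruence (V P : Matrix (Fin n) (Fin n) ℤ)
    (hP : P.det = 1 ∨ P.det = -1) : SEquivalent V (P * V * Pᵀ) :=
  Relation.EqvGen.rel _ _ (SMove.congruence V P hP)

theorem sEquivalent_colExpand (V : Matrix (Fin n) (Fin n) ℤ) (u : Fin n → ℤ) :
    SEquivalent V (colExpand V u) :=
  Relation.EqvGen.rel _ _ (SMove.colExp V u)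

theorem sEquivalent_rowExpand (V : Matrix (Fin n) (Fin n) ℤ) (u : Fin n → ℤ) :
    SEquivalent V (colExpand Vᵀ u)ᵀ :=
  Relation.EqvGen.rel _ _ (SMove.rowExp V u)

end SEquivalent

def sigmaTranspose (p : Σ n, Matrix (Fin n) (Fin n) ℤ) : Σ n, Matrix (Fin n) (Fin n) ℤ :=
  ⟨p.1, p.2ᵀ⟩

theorem SMove.transpose {p q : Σ n, Matrix (Fin n) (Fin n) ℤ} (h : SMove p q) :
    SMove (sigmaTranspose p) (sigmaTranspose q) := by
  cases h with
  | congruence V P hP =>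
    simpa [sigmaTranspose, Matrix.transpose_mul, Matrix.mul_assoc] using
      SMove.congruence Vᵀ P hP
  | colExp V u => simpa [sigmaTranspose] using SMove.rowExp Vᵀ u
  | rowExp V u => simpa [sigmaTranspose] using SMove.colExp Vᵀ u

theorem SEquivalent.transpose {m n : ℕ} {V : Matrix (Fin m) (Fin m) ℤ}
    {W : Matrix (Fin n) (Fin n) ℤ} (h : SEquivalent V W) : SEquivalent Vᵀ Wᵀ := by
  suffices ∀ p q, Relation.EqvGen SMove p q →
      Relation.EqvGen SMove (sigmaTranspose p) (sigmaTranspose q) from this _ _ h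
  intro p q h
  induction h with
  | rel p q h => exact Relation.EqvGen.rel _ _ h.transpose
  | refl p => exact Relation.EqvGen.refl _
  | symm p q _ ih => exact Relation.EqvGen.symm _ _ ih
  | trans p q r _ _ ih₁ ih₂ => exact Relation.EqvGen.trans _ _ _ ih₁ ih₂

theorem colExpand_fin_two (p q r s u₁ u₂ : ℤ) :
    colExpand !![p, q; r, s] ![u₁, u₂] =
      !![p, q, 0, 0; r, s, 0, 0; u₁, u₂, 0, 0; 0, 0, 1, 0] := by
  ext i j
  fin_cases i <;> fin_cases j <;> rfl

theorem colExpand_transpose_fin_two (p q r s u₁ u₂ : ℤ) :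
    (colExpand !![p, q; r, s]ᵀ ![u₁, u₂])ᵀ =
      !![p, q, u₁, 0; r, s, u₂, 0; 0, 0, 0, 1; 0, 0, 0, 0] := by
  ext i j
  fin_cases i <;> fin_cases j <;> rfl

theorem sEquivalent_genusOneSeifert_add_mul (x b k : ℤ) :
    SEquivalent (genusOneSeifert x b) (genusOneSeifert (x + k * (2 * b + 1)) b) := by
  have hP : (!![1, k; 0, 1] : Matrix (Fin 2) (Fin 2) ℤ).det = 1 := by simp [det_fin_two]
  convert sEquivalent_congruence _ _ (Or.inl hP) using 1
  ext i j
  fin_cases i <;> fin_cases j <;> simp [genusOneSeifert, mul_apply, Fin.sum_univ_two]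
  ring

theorem sEquivalent_genusOneSeifert_four_mul_of_odd (x c : ℤ) :
    SEquivalent (genusOneSeifert x (2 * c + 1)) (genusOneSeifert (4 * x) (2 * c + 1)) := by
  set P : Matrix (Fin 4) (Fin 4) ℤ :=
    !![2, -2 * x, -4 * x, -(2 * c + 1); 0, -c, -(2 * c + 1), 0;
      1, -x, -2 * x, -c; 0, 1, 2, 0] with hP_def
  have hP : P.det = -1 := by
    simp [hP_def, det_succ_row_zero, Fin.sum_univ_succ, Fin.succAbove]
    ring
  have hPV : P * colExpand (genusOneSeifert x (2 * c + 1)) ![-(c + 1), 0] * Pᵀ =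
      (colExpand (genusOneSeifert (4 * x) (2 * c + 1))ᵀ ![2 * x, c + 1])ᵀ := by
    simp only [genusOneSeifert, colExpand_fin_two, colExpand_transpose_fin_two, hP_def]
    ext i j
    fin_cases i <;> fin_cases j <;> simp [mul_apply, Fin.sum_univ_four] <;> ring
  -- The stabilizing vector involves `-(c + 1) = -(b + 1) / 2`: this is where `b` odd is used.
  have hstab := (sEquivalent_colExpand (genusOneSeifert x (2 * c + 1)) ![-(c + 1), 0]).trans
    (sEquivalent_congruence _ P (Or.inr hP))
  rw [hPV] at hstab
  exact hstab.trans (sEquivalent_rowExpand _ _).symm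

theorem sEquivalent_genusOneSeifert_transpose_neg (x b : ℤ) :
    SEquivalent (genusOneSeifert x b) (genusOneSeifert x (-(b + 1)))ᵀ := by
  have hQ : (!![-1, 0; 0, 1] : Matrix (Fin 2) (Fin 2) ℤ).det = -1 := by simp [det_fin_two]
  convert (sEquivalent_congruence _ _ (Or.inr hQ)).symm using 1
  ext i j
  fin_cases i <;> fin_cases j <;>
    simp [genusOneSeifert, mul_apply, Fin.sum_univ_two, vecMul, dotProduct]

theorem sEquivalent_genusOneSeifert_four_mul (x b : ℤ) :
    SEquivalent (genusOneSeifert x b) (genusOneSeifert (4 * x) b) := by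
  obtain ⟨c, rfl | rfl⟩ := Int.even_or_odd' b
  · have hodd := sEquivalent_genusOneSeifert_four_mul_of_odd x (-c - 1)
    rw [show 2 * (-c - 1) + 1 = -(2 * c + 1) by ring] at hodd
    exact (sEquivalent_genusOneSeifert_transpose_neg x (2 * c)).trans
      (hodd.transpose.trans (sEquivalent_genusOneSeifert_transpose_neg (4 * x) (2 * c)).symm)
  · exact sEquivalent_genusOneSeifert_four_mul_of_odd x c

theorem stmt_3 (a b : ℤ) :
    SEquivalent !![a, b; b + 1, 0] !![a * b ^ 2, b; b + 1, 0] := by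
  have hshear := sEquivalent_genusOneSeifert_add_mul a b (a * (2 * b - 1))
  rw [show a + a * (2 * b - 1) * (2 * b + 1) = 4 * (a * b ^ 2) by ring] at hshear
  exact hshear.trans (sEquivalent_genusOneSeifert_four_mul (a * b ^ 2) b).symm
end

section
/- Let a, b be integers and let ε ∈ {1, −1}. Let G be the abelian group presented by the matrix [[2a, 2b+1],[2b+1, 0]] and let G' be the abelian group presented by the matrix [[2a+2ε, 2b+1],[2b+1, 0]]. If G and G' are isomorphic, then gcd(2a, 2b+1) = 1 and G is cyclic (isomorphic to ℤ_{(2b+1)²}). -/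
/-!
Let `d = gcd(2a, 2b+1)`. A group presented by a `2 × 2` matrix surjects onto `(ℤ/d)²` exactly
when `d` divides every entry: the reduction map works when it does, and conversely any
surjection `ℤ² → (ℤ/d)²` has the same kernel as reduction mod `d` (one kernel contains the other
and both have index `d²`). So `G ≅ G'` forces `d ∣ 2a + 2ε`, hence `d ∣ 2`, and `d` is odd.
Once `gcd(2a, 2b+1) = 1`, the map `(x, y) ↦ (2b+1)x - 2a y` identifies `G` with `ℤ/(2b+1)²`.
-/

/-- The abelian group presented by the 2×2 integer matrix `[[r, s], [u, v]]`,
i.e. the quotient of `ℤ²` by the subgroup generated by the rows `(r, s)` and `(u, v)`. -/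
def MatPresentedGroup (r s u v : ℤ) : Type :=
  (ℤ × ℤ) ⧸ AddSubgroup.closure {(r, s), (u, v)}

noncomputable instance (r s u v : ℤ) : AddCommGroup (MatPresentedGroup r s u v) := by
  unfold MatPresentedGroup; infer_instance

theorem AddMonoidHom.ker_le_ker_of_surjective {A B : Type*} [AddGroup A] [AddGroup B] [Finite B]
    {π φ : A →+ B} (hπ : Function.Surjective π) (hφ : Function.Surjective φ)
    (h : π.ker ≤ φ.ker) : φ.ker ≤ π.ker := by
  have hindex : π.ker.index = φ.ker.index := by
    rw [AddSubgroup.index_ker, AddSubgroup.index_ker, AddMonoidHom.range_eq_top.2 hπ,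
      AddMonoidHom.range_eq_top.2 hφ]
  have hpos : φ.ker.index ≠ 0 := by
    rw [AddSubgroup.index_ker, AddMonoidHom.range_eq_top.2 hφ]
    exact Nat.card_pos.ne'
  rw [← AddSubgroup.relIndex_eq_one]
  exact (Nat.mul_eq_right hpos).1 (hindex ▸ AddSubgroup.relIndex_mul_index h)

def pairCastHom (d : ℕ) : ℤ × ℤ →+ ZMod d × ZMod d :=
  (Int.castAddHom (ZMod d)).prodMap (Int.castAddHom (ZMod d))

theorem pairCastHom_eq_zero_iff {d : ℕ} {v : ℤ × ℤ} :
    pairCastHom d v = 0 ↔ (d : ℤ) ∣ v.1 ∧ (d : ℤ) ∣ v.2 := by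
  simp [pairCastHom, Prod.ext_iff, ZMod.intCast_zmod_eq_zero_iff_dvd]

theorem pairCastHom_surjective (d : ℕ) : Function.Surjective (pairCastHom d) :=
  Function.Surjective.prodMap ZMod.intCast_surjective ZMod.intCast_surjective

theorem ker_pairCastHom_le (d : ℕ) (φ : ℤ × ℤ →+ ZMod d × ZMod d) :
    (pairCastHom d).ker ≤ φ.ker := by
  rintro ⟨x, y⟩ hv
  obtain ⟨⟨x, rfl⟩, ⟨y, rfl⟩⟩ := pairCastHom_eq_zero_iff.1 hv
  have hsmul : ((d : ℤ) * x, (d : ℤ) * y) = d • (x, y) := by simp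
  rw [AddMonoidHom.mem_ker, hsmul, map_nsmul]
  ext <;> simp

theorem pairCastHom_eq_zero_of_surjective {d : ℕ} [NeZero d] {φ : ℤ × ℤ →+ ZMod d × ZMod d}
    (hφ : Function.Surjective φ) {v : ℤ × ℤ} (hv : φ v = 0) : pairCastHom d v = 0 :=
  AddMonoidHom.ker_le_ker_of_surjective (pairCastHom_surjective d) hφ (ker_pairCastHom_le d φ) hv

namespace MatPresentedGroup

def mk (r s u v : ℤ) : ℤ × ℤ →+ MatPresentedGroup r s u v :=
  QuotientAddGroup.mk' _

theorem mk_surjective (r s u v : ℤ) : Function.Surjective (mk r s u v) :=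
  QuotientAddGroup.mk'_surjective _

theorem mk_fst_row (r s u v : ℤ) : mk r s u v (r, s) = 0 :=
  (QuotientAddGroup.eq_zero_iff _).2 (AddSubgroup.subset_closure (by simp))

theorem mk_snd_row (r s u v : ℤ) : mk r s u v (u, v) = 0 :=
  (QuotientAddGroup.eq_zero_iff _).2 (AddSubgroup.subset_closure (by simp))

theorem closure_rows_le_ker {r s u v : ℤ} {A : Type*} [AddGroup A] {f : ℤ × ℤ →+ A}
    (h₁ : f (r, s) = 0) (h₂ : f (u, v) = 0) :
    AddSubgroup.closure {(r, s), (u, v)} ≤ f.ker := by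
  rw [AddSubgroup.closure_le]
  rintro w (rfl | rfl) <;> assumption

def lift {r s u v : ℤ} {A : Type*} [AddGroup A] (f : ℤ × ℤ →+ A)
    (h₁ : f (r, s) = 0) (h₂ : f (u, v) = 0) : MatPresentedGroup r s u v →+ A :=
  QuotientAddGroup.lift _ f (closure_rows_le_ker h₁ h₂)

theorem lift_mk {r s u v : ℤ} {A : Type*} [AddGroup A] (f : ℤ × ℤ →+ A)
    (h₁ : f (r, s) = 0) (h₂ : f (u, v) = 0) (w : ℤ × ℤ) : lift f h₁ h₂ (mk r s u v w) = f w :=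
  rfl

theorem exists_surjective_iff_dvd (r s u v : ℤ) (d : ℕ) [NeZero d] :
    (∃ f : MatPresentedGroup r s u v →+ ZMod d × ZMod d, Function.Surjective f) ↔
      (d : ℤ) ∣ r ∧ (d : ℤ) ∣ s ∧ (d : ℤ) ∣ u ∧ (d : ℤ) ∣ v := by
  constructor
  · rintro ⟨f, hf⟩
    have hφ : Function.Surjective (f.comp (mk r s u v)) := hf.comp (mk_surjective r s u v)
    obtain ⟨hr, hs⟩ := pairCastHom_eq_zero_iff.1 <| pairCastHom_eq_zero_of_surjective hφ
      (show f (mk r s u v (r, s)) = 0 by rw [mk_fst_row, map_zero])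
    obtain ⟨hu, hv⟩ := pairCastHom_eq_zero_iff.1 <| pairCastHom_eq_zero_of_surjective hφ
      (show f (mk r s u v (u, v)) = 0 by rw [mk_snd_row, map_zero])
    exact ⟨hr, hs, hu, hv⟩
  · rintro ⟨hr, hs, hu, hv⟩
    refine ⟨lift (pairCastHom d) (pairCastHom_eq_zero_iff.2 ⟨hr, hs⟩)
      (pairCastHom_eq_zero_iff.2 ⟨hu, hv⟩), fun z => ?_⟩
    obtain ⟨w, rfl⟩ := pairCastHom_surjective d z
    exact ⟨mk r s u v w, lift_mk _ _ _ w⟩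

def cyclicHom (r m : ℤ) : ℤ × ℤ →+ ZMod (m.natAbs ^ 2) :=
  AddMonoidHom.mk' (fun w => ((m * w.1 - r * w.2 : ℤ) : ZMod (m.natAbs ^ 2)))
    (fun w w' => by simp only [Prod.fst_add, Prod.snd_add]; push_cast; ring)

theorem cyclicHom_surjective {r m : ℤ} (h : IsCoprime r m) :
    Function.Surjective (cyclicHom r m) := by
  obtain ⟨A, B, hAB⟩ := h
  intro z
  obtain ⟨k, rfl⟩ := ZMod.intCast_surjective z
  refine ⟨(B * k, -(A * k)), congrArg Int.cast ?_⟩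
  linear_combination k * hAB

theorem ker_cyclicHom {r m : ℤ} (hm : m ≠ 0) (h : IsCoprime r m) :
    (cyclicHom r m).ker = AddSubgroup.closure {(r, m), (m, 0)} := by
  have hm2 : ((m.natAbs ^ 2 : ℕ) : ℤ) = m * m := by simp [sq]
  refine le_antisymm ?_ (closure_rows_le_ker ?_ ?_)
  · rintro ⟨x, y⟩ hw
    obtain ⟨k, hk⟩ := (ZMod.intCast_zmod_eq_zero_iff_dvd _ _).1 hw
    rw [hm2] at hk
    obtain ⟨y, rfl⟩ : m ∣ y := h.symm.dvd_of_dvd_mul_left ⟨x - m * k, by linear_combination -hk⟩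
    have hx : x = r * y + m * k := mul_left_cancel₀ hm (by linear_combination hk)
    have hcomb : (x, m * y) = y • (r, m) + k • (m, 0) := by
      simp only [Prod.smul_mk, smul_eq_mul, Prod.mk_add_mk, mul_zero, add_zero, hx]
      ring_nf
    rw [hcomb]
    exact add_mem (AddSubgroup.zsmul_mem _ (AddSubgroup.subset_closure (by simp)) y)
      (AddSubgroup.zsmul_mem _ (AddSubgroup.subset_closure (by simp)) k)
  · exact (ZMod.intCast_zmod_eq_zero_iff_dvd _ _).2 ⟨0, by ring⟩
  · exact (ZMod.intCast_zmod_eq_zero_iff_dvd _ _).2 ⟨1, by rw [hm2]; ring⟩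

noncomputable def addEquivZMod {r m : ℤ} (hm : m ≠ 0) (h : IsCoprime r m) :
    MatPresentedGroup r m m 0 ≃+ ZMod (m.natAbs ^ 2) :=
  (QuotientAddGroup.quotientAddEquivOfEq (ker_cyclicHom hm h).symm).trans
    (QuotientAddGroup.quotientKerEquivOfSurjective _ (cyclicHom_surjective h))

end MatPresentedGroup

theorem stmt_6 (a b ε : ℤ) (hε : ε = 1 ∨ ε = -1)
    (h : Nonempty (MatPresentedGroup (2 * a) (2 * b + 1) (2 * b + 1) 0 ≃+
        MatPresentedGroup (2 * a + 2 * ε) (2 * b + 1) (2 * b + 1) 0)) :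
    Int.gcd (2 * a) (2 * b + 1) = 1 ∧
    Nonempty (MatPresentedGroup (2 * a) (2 * b + 1) (2 * b + 1) 0 ≃+
      ZMod ((2 * b + 1).natAbs ^ 2)) := by
  obtain ⟨e⟩ := h
  set d := Int.gcd (2 * a) (2 * b + 1)
  have : NeZero d := ⟨Int.gcd_ne_zero_right (by omega)⟩
  have hd : d = 1 := by
    obtain ⟨f, hf⟩ := (MatPresentedGroup.exists_surjective_iff_dvd _ _ _ _ d).2
      ⟨Int.gcd_dvd_left _ _, Int.gcd_dvd_right _ _, Int.gcd_dvd_right _ _, dvd_zero _⟩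
    obtain ⟨hd', -, -, -⟩ := (MatPresentedGroup.exists_surjective_iff_dvd _ _ _ _ d).1
      ⟨f.comp e.symm.toAddMonoidHom, hf.comp e.symm.surjective⟩
    have h2ε : (d : ℤ) ∣ 2 * ε := by simpa using dvd_sub hd' (Int.gcd_dvd_left _ _)
    have h2 : (d : ℤ) ∣ 2 := (Int.isUnit_iff.2 hε).dvd_mul_right.1 h2ε
    have h1 : (d : ℤ) ∣ 1 := (dvd_add_right (dvd_mul_of_dvd_left h2 b)).1 (Int.gcd_dvd_right _ _)
    exact_mod_cast Int.eq_one_of_dvd_one (by positivity) h1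
  exact ⟨hd, ⟨MatPresentedGroup.addEquivZMod (by omega) (Int.isCoprime_iff_gcd_eq_one.2 hd)⟩⟩
end

section
/- Let a, b, d be integers, set c = b+1, and let ε ∈ {1, −1}. Consider the Laurent polynomials p(t) = a·d·(1−t)² − (b−c·t)·(c−b·t) and q(t) = (a−ε)·d·(1−t)² − (b−c·t)·(c−b·t) in ℤ[t, t⁻¹]. If p ≐ q, i.e. q = ±tᵏ·p for some integer k, then d = 0. -/
/-!
Evaluate at `t = 1` and `t = -1`, where the unit `±tᵏ` becomes `±1`. At `t = 1` both polynomials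
take the value `(b - c)² = 1`, so the sign is `+`. At `t = -1` they take the values
`4ad - (2b + 1)²` and `4(a - ε)d - (2b + 1)²`: if `(-1)ᵏ = 1` these differ by `4εd`, so `d = 0`;
if `(-1)ᵏ = -1` their sum `4(2a - ε)d - 2(2b + 1)²` would vanish, which is impossible modulo 4.
-/

open LaurentPolynomial

section

variable {R : Type*} [CommRing R]

/-- `det (V - t Vᵀ)` for a Seifert matrix `V = !![x, b; c, y]` with `x * y = δ`. -/
noncomputable def seifertAlexander (δ b c : R) : R[T;T⁻¹] :=
  C δ * (1 - T 1) ^ 2 - (C b - C c * T 1) * (C c - C b * T 1)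

theorem eval₂_seifertAlexander (δ b c : R) (u : Rˣ) :
    eval₂ (RingHom.id R) u (seifertAlexander δ b c) =
      δ * (1 - u) ^ 2 - (b - c * u) * (c - b * u) := by
  simp [seifertAlexander, eval₂_C, eval₂_T]

theorem eval₂_one_seifertAlexander (δ b c : R) :
    eval₂ (RingHom.id R) 1 (seifertAlexander δ b c) = (b - c) ^ 2 := by
  rw [eval₂_seifertAlexander]; simp; ring

theorem eval₂_neg_one_seifertAlexander (δ b c : R) :
    eval₂ (RingHom.id R) (-1) (seifertAlexander δ b c) = 4 * δ - (b + c) ^ 2 := by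
  rw [eval₂_seifertAlexander]; simp; ring

end

theorem four_mul_ne_two_mul_odd_sq (x b : ℤ) : 4 * x ≠ 2 * (2 * b + 1) ^ 2 := by
  have : (2 * b + 1) ^ 2 = 4 * (b ^ 2 + b) + 1 := by ring
  omega

theorem stmt_9 (a b d ε : ℤ) (hε : ε = 1 ∨ ε = -1) (c : ℤ) (hc : c = b + 1)
    (p q : LaurentPolynomial ℤ)
    (hp : p = C (a * d) * (1 - T 1) ^ 2 - (C b - C c * T 1) * (C c - C b * T 1))
    (hq : q = C ((a - ε) * d) * (1 - T 1) ^ 2 - (C b - C c * T 1) * (C c - C b * T 1))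
    (h : ∃ k : ℤ, q = T k * p ∨ q = -(T k * p)) :
    d = 0 := by
  change p = seifertAlexander _ b c at hp
  change q = seifertAlexander _ b c at hq
  subst hp hq hc
  obtain ⟨k, hk⟩ := h
  have hunit : _ = T k * _ := hk.resolve_right fun hneg => by
    have h1 := congrArg (eval₂ (RingHom.id ℤ) 1) hneg
    rw [map_neg, map_mul, eval₂_T, eval₂_one_seifertAlexander,
      eval₂_one_seifertAlexander] at h1
    norm_num at h1
  have h1 := congrArg (eval₂ (RingHom.id ℤ) (-1)) hunit
  rw [map_mul, eval₂_T, eval₂_neg_one_seifertAlexander, eval₂_neg_one_seifertAlexander] at h1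
  rcases Int.units_eq_one_or ((-1) ^ k) with hs | hs <;> rw [hs] at h1
  · have : ε * d = 0 := by push_cast at h1; linarith
    rcases hε with rfl | rfl <;> omega
  · refine absurd ?_ (four_mul_ne_two_mul_odd_sq ((2 * a - ε) * d) b)
    push_cast at h1; linarith
end

section
/- Let n be an integer. If there exist an integer b and a unit u = ±tᵏ of ℤ[t, t⁻¹] such that −n·(t²+1) + (2n+1)·t = u·( b·(b+1)·(t²+1) − (b² + (b+1)²)·t ) in ℤ[t, t⁻¹], then n is even. -/
open LaurentPolynomial

/-!
Evaluating at `t = -1` turns the identity into `-(4n + 1) = e (2b + 1)²`, where `e = ±1` is the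
value of the unit. Since `(2b + 1)² = 4 b (b + 1) + 1`, reduction modulo 4 forces `e = -1`, and then
`n = b (b + 1)` is a product of consecutive integers.
-/

theorem Int.even_of_four_mul_add_one_eq_mul_sq {n b e : ℤ} (he : IsUnit e)
    (h : 4 * n + 1 = e * (2 * b + 1) ^ 2) : Even n := by
  have hsq : (2 * b + 1) ^ 2 = 4 * (b * (b + 1)) + 1 := by ring
  rcases Int.isUnit_iff.mp he with rfl | rfl
  · have hn : n = b * (b + 1) := by linarith
    exact hn ▸ Int.even_mul_succ_self b
  · omega

theorem stmt_10 (n : ℤ)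
    (h : ∃ (b : ℤ) (u : (LaurentPolynomial ℤ)ˣ) (k : ℤ),
      ((u : LaurentPolynomial ℤ) = T k ∨ (u : LaurentPolynomial ℤ) = -(T k)) ∧
      (C (-n) * (T 2 + 1) + C (2 * n + 1) * T 1 : LaurentPolynomial ℤ) =
        (u : LaurentPolynomial ℤ) *
          (C (b * (b + 1)) * (T 2 + 1) - C (b ^ 2 + (b + 1) ^ 2) * T 1)) :
    Even n := by
  obtain ⟨b, u, -, -, heq⟩ := h
  let ev : LaurentPolynomial ℤ →+* ℤ := eval₂ (RingHom.id ℤ) (-1)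
  have hev : 4 * n + 1 = -ev u * (2 * b + 1) ^ 2 := by
    have := congrArg ev heq
    simp only [ev, map_add, map_mul, map_sub, map_one, eval₂_T, eval₂_C, RingHom.id_apply] at this
    norm_num at this
    linear_combination -this
  exact Int.even_of_four_mul_add_one_eq_mul_sq (u.map ev).isUnit.neg hev
end
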